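/- arXiv:2103.01400 — 3 statements merged into one kernel-verified Lean document; each statement's English description precedes it below -/
import Mathlib

section
/- Let ℓ : ℝ^d × ℝ^m → ℝ satisfy Assumption 1 with constants C_θθ and C_θx, where m = d. Fix x ∈ ℝ^d, ε > 0, and θ_min > 0, and define the L₂-optimal adversarial example x'(θ) = x − ε·θ/‖θ‖ for θ ≠ 0. Then for all θ₁, θ₂ ∈ ℝ^d with ‖θ₁‖ ≥ θ_min and ‖θ₂‖ ≥ θ_min, ‖∇_θ ℓ(x'(θ₁), θ₁) − ∇_θ ℓ(x'(θ₂), θ₂)‖ ≤ (C_θθ + ε·C_θx/θ_min)·‖θ₁ − θ₂‖; i.e., the gradient of the adversarial loss with L₂ constraint is (C_θθ + ε·C_θx/θ_min)-Lipschitz on the set {θ : ‖θ‖ ≥ θ_min}. -/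
/-!
The gradient `g(x, θ) = ∇_θ ℓ(x, θ)` is Lipschitz in each argument separately, so along the
curve `θ ↦ (x'(θ), θ)` it is Lipschitz with constant `C_θθ + C_θx · Lip(x')`. The attack
`x'(θ) = x − ε θ/‖θ‖` is `ε` times the radial projection onto the unit sphere, and the identity
`‖a − b‖² = (‖a‖ − ‖b‖)² + ‖a‖‖b‖ ‖a/‖a‖ − b/‖b‖‖²` shows that this projection is
`1/θ_min`-Lipschitz outside the ball of radius `θ_min`.
-/

section Normalize

variable {E : Type*} [NormedAddCommGroup E] [InnerProductSpace ℝ E]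

theorem norm_sub_sq_eq_sq_sub_norm_add_mul_norm_normalize_sub (a b : E) :
    ‖a - b‖ ^ 2 = (‖a‖ - ‖b‖) ^ 2 + ‖a‖ * ‖b‖ * ‖‖a‖⁻¹ • a - ‖b‖⁻¹ • b‖ ^ 2 := by
  rcases eq_or_ne a 0 with rfl | ha
  · simp
  rcases eq_or_ne b 0 with rfl | hb
  · simp
  rw [norm_sub_sq_real, norm_sub_sq_real, norm_smul, norm_smul, real_inner_smul_left,
    real_inner_smul_right, norm_inv, norm_inv, norm_norm, norm_norm]
  field_simp
  ring

theorem mul_norm_normalize_sub_le {r : ℝ} (hr : 0 ≤ r) {a b : E} (ha : r ≤ ‖a‖)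
    (hb : r ≤ ‖b‖) : r * ‖‖a‖⁻¹ • a - ‖b‖⁻¹ • b‖ ≤ ‖a - b‖ := by
  have hr2 : r * r ≤ ‖a‖ * ‖b‖ := mul_le_mul ha hb hr (norm_nonneg a)
  refine le_of_sq_le_sq ?_ (norm_nonneg _)
  rw [norm_sub_sq_eq_sq_sub_norm_add_mul_norm_normalize_sub a b, mul_pow]
  nlinarith [sq_nonneg (‖a‖ - ‖b‖), sq_nonneg ‖‖a‖⁻¹ • a - ‖b‖⁻¹ • b‖]

/-- The optimal `L₂` attack of radius `ε` on the linear logistic model with weights `θ`. -/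
noncomputable def l2Attack (x : E) (ε : ℝ) (θ : E) : E := x - (ε / ‖θ‖) • θ

theorem norm_l2Attack_sub_le (x : E) {ε r : ℝ} (hε : 0 ≤ ε) (hr : 0 < r) {θ₁ θ₂ : E}
    (h₁ : r ≤ ‖θ₁‖) (h₂ : r ≤ ‖θ₂‖) :
    ‖l2Attack x ε θ₁ - l2Attack x ε θ₂‖ ≤ ε / r * ‖θ₁ - θ₂‖ := by
  have hsub : l2Attack x ε θ₁ - l2Attack x ε θ₂ = ε • (‖θ₂‖⁻¹ • θ₂ - ‖θ₁‖⁻¹ • θ₁) := by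
    simp only [l2Attack, smul_sub, smul_smul, div_eq_mul_inv]
    abel
  rw [hsub, norm_smul, Real.norm_of_nonneg hε, norm_sub_rev, div_mul_eq_mul_div,
    le_div_iff₀ hr, mul_assoc, mul_comm _ r]
  exact mul_le_mul_of_nonneg_left (mul_norm_normalize_sub_le hr.le h₁ h₂) hε

end Normalize

theorem norm_sub_le_of_lipschitz_left_right {X T F : Type*} [SeminormedAddCommGroup X]
    [SeminormedAddCommGroup T] [SeminormedAddCommGroup F] (g : X → T → F) {A B : ℝ}
    (hT : ∀ x θ₁ θ₂, ‖g x θ₁ - g x θ₂‖ ≤ A * ‖θ₁ - θ₂‖)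
    (hX : ∀ x₁ x₂ θ, ‖g x₁ θ - g x₂ θ‖ ≤ B * ‖x₁ - x₂‖) (x₁ x₂ : X) (θ₁ θ₂ : T) :
    ‖g x₁ θ₁ - g x₂ θ₂‖ ≤ A * ‖θ₁ - θ₂‖ + B * ‖x₁ - x₂‖ :=
  calc ‖g x₁ θ₁ - g x₂ θ₂‖ ≤ ‖g x₁ θ₁ - g x₁ θ₂‖ + ‖g x₁ θ₂ - g x₂ θ₂‖ :=
        norm_sub_le_norm_sub_add_norm_sub _ _ _
    _ ≤ A * ‖θ₁ - θ₂‖ + B * ‖x₁ - x₂‖ := add_le_add (hT _ _ _) (hX _ _ _)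

theorem l2_adv_loss_gradient_lipschitz_general (d : ℕ)
    (ℓ : EuclideanSpace ℝ (Fin d) → EuclideanSpace ℝ (Fin d) → ℝ)
    (Cθθ Cθx : ℝ) (hCθx : 0 ≤ Cθx)
    (hθθ : ∀ (x : EuclideanSpace ℝ (Fin d)) (θ₁ θ₂ : EuclideanSpace ℝ (Fin d)),
      ‖gradient (ℓ x) θ₁ - gradient (ℓ x) θ₂‖ ≤ Cθθ * ‖θ₁ - θ₂‖)
    (hθx : ∀ (x₁ x₂ : EuclideanSpace ℝ (Fin d)) (θ : EuclideanSpace ℝ (Fin d)),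
      ‖gradient (ℓ x₁) θ - gradient (ℓ x₂) θ‖ ≤ Cθx * ‖x₁ - x₂‖)
    (x : EuclideanSpace ℝ (Fin d)) (ε θmin : ℝ) (hε : 0 < ε) (hθmin : 0 < θmin) :
    ∀ θ₁ θ₂ : EuclideanSpace ℝ (Fin d), θmin ≤ ‖θ₁‖ → θmin ≤ ‖θ₂‖ →
      ‖gradient (ℓ (x - (ε / ‖θ₁‖) • θ₁)) θ₁ - gradient (ℓ (x - (ε / ‖θ₂‖) • θ₂)) θ₂‖
        ≤ (Cθθ + ε * Cθx / θmin) * ‖θ₁ - θ₂‖ := by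
  intro θ₁ θ₂ h₁ h₂
  calc _ ≤ Cθθ * ‖θ₁ - θ₂‖ + Cθx * ‖l2Attack x ε θ₁ - l2Attack x ε θ₂‖ :=
        norm_sub_le_of_lipschitz_left_right (fun x' ↦ gradient (ℓ x')) hθθ hθx _ _ θ₁ θ₂
    _ ≤ Cθθ * ‖θ₁ - θ₂‖ + Cθx * (ε / θmin * ‖θ₁ - θ₂‖) := by
        gcongr
        exact norm_l2Attack_sub_le x hε.le hθmin h₁ h₂
    _ = (Cθθ + ε * Cθx / θmin) * ‖θ₁ - θ₂‖ := by ring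

/-- Under Assumption 1 (with `m = d`), the gradient of the adversarial
loss using the `L₂`-optimal attack `x'(θ) = x − ε·θ/‖θ‖` is
`(C_θθ + ε·C_θx/θ_min)`-Lipschitz on `{θ : ‖θ‖ ≥ θ_min}`. -/
theorem l2_adv_loss_gradient_lipschitz (d : ℕ)
    (ℓ : EuclideanSpace ℝ (Fin d) → EuclideanSpace ℝ (Fin d) → ℝ)
    (Cθθ Cθx : ℝ) (hCθθ : 0 ≤ Cθθ) (hCθx : 0 ≤ Cθx)
    (hdiff : ∀ (x : EuclideanSpace ℝ (Fin d)) (θ : EuclideanSpace ℝ (Fin d)),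
      DifferentiableAt ℝ (ℓ x) θ)
    (hθθ : ∀ (x : EuclideanSpace ℝ (Fin d)) (θ₁ θ₂ : EuclideanSpace ℝ (Fin d)),
      ‖gradient (ℓ x) θ₁ - gradient (ℓ x) θ₂‖ ≤ Cθθ * ‖θ₁ - θ₂‖)
    (hθx : ∀ (x₁ x₂ : EuclideanSpace ℝ (Fin d)) (θ : EuclideanSpace ℝ (Fin d)),
      ‖gradient (ℓ x₁) θ - gradient (ℓ x₂) θ‖ ≤ Cθx * ‖x₁ - x₂‖)
    (x : EuclideanSpace ℝ (Fin d)) (ε θmin : ℝ) (hε : 0 < ε) (hθmin : 0 < θmin) :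
    ∀ θ₁ θ₂ : EuclideanSpace ℝ (Fin d), θmin ≤ ‖θ₁‖ → θmin ≤ ‖θ₂‖ →
      ‖gradient (ℓ (x - (ε / ‖θ₁‖) • θ₁)) θ₁ - gradient (ℓ (x - (ε / ‖θ₂‖) • θ₂)) θ₂‖
        ≤ (Cθθ + ε * Cθx / θmin) * ‖θ₁ - θ₂‖ :=
  l2_adv_loss_gradient_lipschitz_general d ℓ Cθθ Cθx hCθx hθθ hθx x ε θmin hε hθmin
end

section
/- Let ℓ : ℝ^d × ℝ^m → ℝ be such that the map (x,θ) ↦ ∇_x ℓ(x,θ) is continuously differentiable on an open set V ⊆ ℝ^d × ℝ^m. Let c > 0 and C_θx ≥ 0, and suppose that for all (x,θ) ∈ V every eigenvalue of the Hessian ∇²_x ℓ(x,θ) is at most −c (in particular ∇²_x ℓ ≺ 0), and the operator norm of the mixed derivative ∂_θ ∇_x ℓ(x,θ) is at most C_θx. Let (x₀, θ₀) ∈ V satisfy ∇_x ℓ(x₀, θ₀) = 0. Then there exist an open convex neighborhood U of θ₀ and a continuously differentiable map g : U → ℝ^d such that g(θ₀) = x₀, ∇_x ℓ(g(θ), θ)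 = 0 for every θ ∈ U, and ‖g(θ₁) − g(θ₂)‖ ≤ (C_θx/c)·‖θ₁ − θ₂‖ for all θ₁, θ₂ ∈ U. -/
/-! The Hessian `∇²ₓ ℓ` is symmetric with spectrum in `(-∞, -c]`, so the Rayleigh quotient gives
`⟪H v, v⟫ ≤ -c ‖v‖²`, hence `c ‖v‖ ≤ ‖H v‖` and `H` is invertible. The implicit function theorem
then provides a `C¹` solution `g` of `∇ₓ ℓ (g θ, θ) = 0` near `θ₀`. Differentiating this identity
gives `H ∘ Dg = -∂_θ ∇ₓ ℓ`, so `‖Dg‖ ≤ C_θx / c`, and the mean value inequality on a ball turns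
this into the Lipschitz bound. -/

open RealInnerProductSpace Topology Metric Module.End

theorem LinearMap.IsSymmetric.inner_map_self_le_of_forall_hasEigenvalue_le
    {E : Type*} [NormedAddCommGroup E] [InnerProductSpace ℝ E] [FiniteDimensional ℝ E]
    {T : E →ₗ[ℝ] E} (hT : T.IsSymmetric) {a : ℝ} (ha : ∀ μ, HasEigenvalue T μ → μ ≤ a)
    (v : E) : ⟪T v, v⟫ ≤ a * ‖v‖ ^ 2 := by
  rcases eq_or_ne v 0 with rfl | hv
  · simp
  have : Nontrivial E := ⟨⟨v, 0, hv⟩⟩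
  have hbdd : BddAbove (Set.range fun x : {x : E // x ≠ 0} => ⟪T x, x⟫ / ‖(x : E)‖ ^ 2) := by
    refine ⟨‖LinearMap.toContinuousLinearMap T‖, Set.forall_mem_range.2 fun x => ?_⟩
    simpa [ContinuousLinearMap.rayleighQuotient, ContinuousLinearMap.reApplyInnerSelf_apply]
      using (le_abs_self _).trans ((LinearMap.toContinuousLinearMap T).rayleighQuotient_le_norm x)
  have hsup := hT.hasEigenvalue_iSup_of_finiteDimensional
  simp only [RCLike.re_to_real] at hsup
  rw [← div_le_iff₀ (by positivity)]
  exact (le_ciSup hbdd ⟨v, hv⟩).trans (ha _ hsup)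

theorem mul_norm_le_norm_apply_of_inner_map_self_le
    {E : Type*} [NormedAddCommGroup E] [InnerProductSpace ℝ E]
    {T : E →ₗ[ℝ] E} {c : ℝ} {v : E} (h : ⟪T v, v⟫ ≤ -c * ‖v‖ ^ 2) : c * ‖v‖ ≤ ‖T v‖ := by
  rcases eq_or_ne v 0 with rfl | hv
  · simp
  have hpos : 0 < ‖v‖ := norm_pos_iff.mpr hv
  have hcs : -⟪T v, v⟫ ≤ ‖T v‖ * ‖v‖ := (neg_le_abs _).trans (abs_real_inner_le_norm _ _)
  nlinarith

theorem ContinuousLinearMap.isInvertible_of_mul_norm_le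
    {𝕜 E : Type*} [NontriviallyNormedField 𝕜] [CompleteSpace 𝕜] [NormedAddCommGroup E]
    [NormedSpace 𝕜 E] [FiniteDimensional 𝕜 E] {T : E →L[𝕜] E} {c : ℝ} (hc : 0 < c)
    (hT : ∀ v, c * ‖v‖ ≤ ‖T v‖) : T.IsInvertible := by
  have hinj : Function.Injective T := by
    refine (injective_iff_map_eq_zero T).2 fun v hv => norm_le_zero_iff.1 ?_
    have := hT v
    rw [hv, norm_zero] at this
    nlinarith [norm_nonneg v]
  exact ⟨(LinearEquiv.ofInjectiveEndo (T : E →ₗ[𝕜] E) hinj).toContinuousLinearEquiv, rfl⟩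

section PartialDerivatives

variable {𝕜 : Type*} [NontriviallyNormedField 𝕜]
  {E F G : Type*} [NormedAddCommGroup E] [NormedSpace 𝕜 E] [NormedAddCommGroup F]
  [NormedSpace 𝕜 F] [NormedAddCommGroup G] [NormedSpace 𝕜 G] {f : E × F → G}

theorem DifferentiableAt.fderiv_prodMk_left {x : E} {y : F} (hf : DifferentiableAt 𝕜 f (x, y)) :
    fderiv 𝕜 (fun x' => f (x', y)) x = fderiv 𝕜 f (x, y) ∘L .inl 𝕜 E F :=
  (hf.hasFDerivAt.comp x (hasFDerivAt_prodMk_left x y)).fderiv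

theorem DifferentiableAt.fderiv_prodMk_right {x : E} {y : F} (hf : DifferentiableAt 𝕜 f (x, y)) :
    fderiv 𝕜 (fun y' => f (x, y')) y = fderiv 𝕜 f (x, y) ∘L .inr 𝕜 E F :=
  (hf.hasFDerivAt.comp y (hasFDerivAt_prodMk_right x y)).fderiv

theorem norm_fderiv_implicit_le {g : F → E} {y : F} {c : ℝ}
    (hf : DifferentiableAt 𝕜 f (g y, y)) (hg : DifferentiableAt 𝕜 g y)
    (hfg : ∀ᶠ y' in 𝓝 y, f (g y', y') = 0) (hc : 0 < c)
    (hx : ∀ v, c * ‖v‖ ≤ ‖fderiv 𝕜 (fun x => f (x, y)) (g y) v‖) :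
    ‖fderiv 𝕜 g y‖ ≤ ‖fderiv 𝕜 (fun y' => f (g y, y')) y‖ / c := by
  set Dx := fderiv 𝕜 (fun x => f (x, y)) (g y)
  set Dy := fderiv 𝕜 (fun y' => f (g y, y')) y
  have hchain : HasFDerivAt (fun y' => f (g y', y'))
      (fderiv 𝕜 f (g y, y) ∘L (fderiv 𝕜 g y).prod (.id 𝕜 F)) y :=
    hf.hasFDerivAt.comp (f := fun y' => (g y', y')) y (hg.hasFDerivAt.prodMk (hasFDerivAt_id y))
  have hzero : fderiv 𝕜 f (g y, y) ∘L (fderiv 𝕜 g y).prod (.id 𝕜 F) = 0 :=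
    hchain.unique ((hasFDerivAt_const 0 y).congr_of_eventuallyEq hfg)
  have hsplit : ∀ w, Dx (fderiv 𝕜 g y w) + Dy w = 0 := fun w => by
    simpa [Dx, Dy, hf.fderiv_prodMk_left, hf.fderiv_prodMk_right, ← map_add]
      using DFunLike.congr_fun hzero w
  refine ContinuousLinearMap.opNorm_le_bound _ (by positivity) fun w => ?_
  rw [div_mul_eq_mul_div, le_div_iff₀' hc]
  calc c * ‖fderiv 𝕜 g y w‖ ≤ ‖Dx (fderiv 𝕜 g y w)‖ := hx _
    _ = ‖Dy w‖ := by rw [eq_neg_of_add_eq_zero_left (hsplit w), norm_neg]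
    _ ≤ ‖Dy‖ * ‖w‖ := Dy.le_opNorm w

end PartialDerivatives

theorem ContDiffAt.exists_eventually_implicitFunction {E F G : Type*} [NormedAddCommGroup E]
    [NormedSpace ℝ E] [CompleteSpace E] [NormedAddCommGroup F] [NormedSpace ℝ F] [CompleteSpace F]
    [NormedAddCommGroup G] [NormedSpace ℝ G] [CompleteSpace G] {f : E × F → G} {x₀ : E} {y₀ : F}
    (hf : ContDiffAt ℝ 1 f (x₀, y₀))
    (hx : (fderiv ℝ (fun x => f (x, y₀)) x₀).IsInvertible) :
    ∃ g : F → E, g y₀ = x₀ ∧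
      ∀ᶠ y in 𝓝 y₀, ContDiffAt ℝ 1 g y ∧ f (g y, y) = f (x₀, y₀) := by
  -- Mathlib's implicit function solves for the second factor of the product.
  set φ : F × E → G := fun q => f (q.2, q.1)
  have hφ : ContDiffAt ℝ 1 φ (y₀, x₀) := hf.comp (y₀, x₀) (contDiffAt_snd.prodMk contDiffAt_fst)
  have hφx : (fderiv ℝ φ (y₀, x₀) ∘L .inr ℝ F E).IsInvertible := by
    rwa [← (hφ.differentiableAt one_ne_zero).fderiv_prodMk_right]
  refine ⟨hφ.implicitFunction one_ne_zero hφx, hφ.implicitFunction_apply_self one_ne_zero hφx, ?_⟩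
  filter_upwards [(hφ.contDiffAt_implicitFunction one_ne_zero hφx).eventually (by simp),
    hφ.eventually_apply_implicitFunction one_ne_zero hφx] with y hcd hzero
  exact ⟨hcd, hzero⟩

theorem exists_convex_nhds_implicitFunction_lipschitz {E F : Type*} [NormedAddCommGroup E]
    [NormedSpace ℝ E] [FiniteDimensional ℝ E] [NormedAddCommGroup F] [NormedSpace ℝ F]
    [CompleteSpace F] {f : E × F → E} {V : Set (E × F)} (hV : IsOpen V)
    (hf : ContDiffOn ℝ 1 f V) {c C : ℝ} (hc : 0 < c)
    (hfx : ∀ p ∈ V, ∀ v, c * ‖v‖ ≤ ‖fderiv ℝ (fun x => f (x, p.2)) p.1 v‖)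
    (hfy : ∀ p ∈ V, ‖fderiv ℝ (fun y => f (p.1, y)) p.2‖ ≤ C)
    {x₀ : E} {y₀ : F} (h₀ : (x₀, y₀) ∈ V) (hcrit : f (x₀, y₀) = 0) :
    ∃ U : Set F, IsOpen U ∧ Convex ℝ U ∧ y₀ ∈ U ∧
      ∃ g : F → E, ContDiffOn ℝ 1 g U ∧ g y₀ = x₀ ∧ (∀ y ∈ U, f (g y, y) = 0) ∧
        ∀ y₁ ∈ U, ∀ y₂ ∈ U, ‖g y₁ - g y₂‖ ≤ C / c * ‖y₁ - y₂‖ := by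
  have hfV : ∀ p ∈ V, ContDiffAt ℝ 1 f p := fun p hp => hf.contDiffAt (hV.mem_nhds hp)
  obtain ⟨g, hg₀, hev⟩ := (hfV _ h₀).exists_eventually_implicitFunction
    (ContinuousLinearMap.isInvertible_of_mul_norm_le hc (hfx _ h₀))
  have hgV : ∀ᶠ y in 𝓝 y₀, (g y, y) ∈ V :=
    (hev.self_of_nhds.1.continuousAt.prodMk continuousAt_id).eventually_mem
      (by rw [hg₀]; exact hV.mem_nhds h₀)
  obtain ⟨r, hr, hball⟩ := eventually_nhds_iff_ball.1 (hev.and hgV)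
  have hdiff : ∀ y ∈ ball y₀ r, DifferentiableAt ℝ g y := fun y hy =>
    (hball y hy).1.1.differentiableAt one_ne_zero
  have hderiv : ∀ y ∈ ball y₀ r, ‖fderiv ℝ g y‖ ≤ C / c := fun y hy => by
    have hyV := (hball y hy).2
    refine (norm_fderiv_implicit_le ((hfV _ hyV).differentiableAt one_ne_zero) (hdiff y hy) ?_ hc
      (hfx _ hyV)).trans (div_le_div_of_nonneg_right (hfy _ hyV) hc.le)
    filter_upwards [isOpen_ball.mem_nhds hy] with y' hy'
    exact (hball y' hy').1.2.trans hcrit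
  exact ⟨ball y₀ r, isOpen_ball, convex_ball y₀ r, mem_ball_self hr, g,
    fun y hy => (hball y hy).1.1.contDiffWithinAt, hg₀, fun y hy => (hball y hy).1.2.trans hcrit,
    fun y₁ h₁ y₂ h₂ => (convex_ball y₀ r).norm_image_sub_le_of_norm_fderiv_le hdiff hderiv h₂ h₁⟩

theorem interior_adv_example_implicit_lipschitz_general (d m : ℕ)
    (ℓ : EuclideanSpace ℝ (Fin d) → EuclideanSpace ℝ (Fin m) → ℝ)
    (V : Set (EuclideanSpace ℝ (Fin d) × EuclideanSpace ℝ (Fin m))) (hV : IsOpen V)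
    (hsmooth : ContDiffOn ℝ 1
      (fun p : EuclideanSpace ℝ (Fin d) × EuclideanSpace ℝ (Fin m) =>
        gradient (fun x => ℓ x p.2) p.1) V)
    (c Cθx : ℝ) (hc : 0 < c)
    (hsymm : ∀ p ∈ V, ∀ v w : EuclideanSpace ℝ (Fin d),
      ⟪(fderiv ℝ (fun x => gradient (fun x' => ℓ x' p.2) x) p.1) v, w⟫ =
        ⟪v, (fderiv ℝ (fun x => gradient (fun x' => ℓ x' p.2) x) p.1) w⟫)
    (heig : ∀ p ∈ V, ∀ (μ : ℝ) (v : EuclideanSpace ℝ (Fin d)), v ≠ 0 →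
      (fderiv ℝ (fun x => gradient (fun x' => ℓ x' p.2) x) p.1) v = μ • v → μ ≤ -c)
    (hmix : ∀ p ∈ V,
      ‖fderiv ℝ (fun θ => gradient (fun x' => ℓ x' θ) p.1) p.2‖ ≤ Cθx)
    (x₀ : EuclideanSpace ℝ (Fin d)) (θ₀ : EuclideanSpace ℝ (Fin m))
    (hmem : (x₀, θ₀) ∈ V)
    (hcrit : gradient (fun x => ℓ x θ₀) x₀ = 0) :
    ∃ U : Set (EuclideanSpace ℝ (Fin m)), IsOpen U ∧ Convex ℝ U ∧ θ₀ ∈ U ∧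
      ∃ g : EuclideanSpace ℝ (Fin m) → EuclideanSpace ℝ (Fin d),
        ContDiffOn ℝ 1 g U ∧ g θ₀ = x₀ ∧
        (∀ θ ∈ U, gradient (fun x => ℓ x θ) (g θ) = 0) ∧
        ∀ θ₁ ∈ U, ∀ θ₂ ∈ U, ‖g θ₁ - g θ₂‖ ≤ (Cθx / c) * ‖θ₁ - θ₂‖ := by
  have hcoercive : ∀ p ∈ V, ∀ v, c * ‖v‖ ≤
      ‖fderiv ℝ (fun x => gradient (fun x' => ℓ x' p.2) x) p.1 v‖ := fun p hp v =>
    mul_norm_le_norm_apply_of_inner_map_self_le <|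
      LinearMap.IsSymmetric.inner_map_self_le_of_forall_hasEigenvalue_le (hsymm p hp)
        (fun μ hμ => by
          obtain ⟨w, hw⟩ := hμ.exists_hasEigenvector
          exact heig p hp μ w hw.2 hw.apply_eq_smul) v
  exact exists_convex_nhds_implicitFunction_lipschitz hV hsmooth hc hcoercive hmix hmem hcrit

/-- Implicit-function-theorem smoothness of the (interior) optimal
adversarial example. If `(x,θ) ↦ ∇_x ℓ(x,θ)` is `C¹` on an open set `V`, the
Hessian `∇²_x ℓ` is symmetric with every eigenvalue at most `−c < 0` on `V`, and the
mixed derivative `∂_θ ∇_x ℓ` has operator norm at most `C_θx` on `V`, then around any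
critical point `∇_x ℓ(x₀,θ₀) = 0` with `(x₀,θ₀) ∈ V` there is an open convex
neighborhood `U` of `θ₀` and a `C¹` map `g` with `g(θ₀) = x₀`,
`∇_x ℓ(g(θ),θ) = 0` on `U`, and `g` is `(C_θx/c)`-Lipschitz on `U`. -/
theorem interior_adv_example_implicit_lipschitz (d m : ℕ)
    (ℓ : EuclideanSpace ℝ (Fin d) → EuclideanSpace ℝ (Fin m) → ℝ)
    (V : Set (EuclideanSpace ℝ (Fin d) × EuclideanSpace ℝ (Fin m))) (hV : IsOpen V)
    (hsmooth : ContDiffOn ℝ 1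
      (fun p : EuclideanSpace ℝ (Fin d) × EuclideanSpace ℝ (Fin m) =>
        gradient (fun x => ℓ x p.2) p.1) V)
    (c Cθx : ℝ) (hc : 0 < c) (hCθx : 0 ≤ Cθx)
    (hsymm : ∀ p ∈ V, ∀ v w : EuclideanSpace ℝ (Fin d),
      ⟪(fderiv ℝ (fun x => gradient (fun x' => ℓ x' p.2) x) p.1) v, w⟫ =
        ⟪v, (fderiv ℝ (fun x => gradient (fun x' => ℓ x' p.2) x) p.1) w⟫)
    (heig : ∀ p ∈ V, ∀ (μ : ℝ) (v : EuclideanSpace ℝ (Fin d)), v ≠ 0 →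
      (fderiv ℝ (fun x => gradient (fun x' => ℓ x' p.2) x) p.1) v = μ • v → μ ≤ -c)
    (hmix : ∀ p ∈ V,
      ‖fderiv ℝ (fun θ => gradient (fun x' => ℓ x' θ) p.1) p.2‖ ≤ Cθx)
    (x₀ : EuclideanSpace ℝ (Fin d)) (θ₀ : EuclideanSpace ℝ (Fin m))
    (hmem : (x₀, θ₀) ∈ V)
    (hcrit : gradient (fun x => ℓ x θ₀) x₀ = 0) :
    ∃ U : Set (EuclideanSpace ℝ (Fin m)), IsOpen U ∧ Convex ℝ U ∧ θ₀ ∈ U ∧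
      ∃ g : EuclideanSpace ℝ (Fin m) → EuclideanSpace ℝ (Fin d),
        ContDiffOn ℝ 1 g U ∧ g θ₀ = x₀ ∧
        (∀ θ ∈ U, gradient (fun x => ℓ x θ) (g θ) = 0) ∧
        ∀ θ₁ ∈ U, ∀ θ₂ ∈ U, ‖g θ₁ - g θ₂‖ ≤ (Cθx / c) * ‖θ₁ - θ₂‖ :=
  interior_adv_example_implicit_lipschitz_general d m ℓ V hV hsmooth c Cθx hc hsymm heig hmix x₀ θ₀
    hmem hcrit
end

section
/- Fix x ∈ ℝ^d and ε > 0, and let ℓ : ℝ^d × ℝ^m → ℝ be such that (x',θ) ↦ ∇_{x'} ℓ(x',θ) is continuously differentiable. Define the Lagrangian J(μ, x', θ) = ℓ(x', θ) − μ(‖x' − x‖₂ − ε) for x' ≠ x, μ ∈ ℝ, and write x̃ = (μ, x') ∈ ℝ^{1+d}, with ∇_x̃ J its gradient in (μ, x') and ∇²_x̃ J the corresponding (1+d)×(1+d) bordered Hessian. Let c > 0 and C_θx ≥ 0, and suppose on an open set V containing (μ*, x'*, θ₀): every singular value of ∇²_x̃ J is at least c, and the operator norm of the mixed derivative ∂_θ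 ∇_x̃ J is at most C_θx. Suppose ∇_x̃ J(μ*, x'*, θ₀) = 0 with ‖x'* − x‖₂ = ε. Then there exist an open convex neighborhood U of θ₀ and continuously differentiable maps μ : U → ℝ and x' : U → ℝ^d with μ(θ₀) = μ*, x'(θ₀) = x'*, ∇_x̃ J(μ(θ), x'(θ), θ) = 0 for all θ ∈ U, and ‖x'(θ₁) − x'(θ₂)‖₂ ≤ (C_θx/c)·‖θ₁ − θ₂‖ for all θ₁, θ₂ ∈ U. -/
open RealInnerProductSpace

/-- The Lagrangian `J(μ, x', θ) = ℓ(x', θ) − μ(‖x' − x‖₂ − ε)` of the `L₂`-constrained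
adversarial attack problem, viewed as a function of `x̃ = (μ, x')` in the Euclidean
(`L²`) product space `WithLp 2 (ℝ × ℝ^d)` and of the parameter `θ`. -/
noncomputable def advLagrangian (d m : ℕ)
    (ℓ : EuclideanSpace ℝ (Fin d) → EuclideanSpace ℝ (Fin m) → ℝ)
    (x : EuclideanSpace ℝ (Fin d)) (ε : ℝ)
    (xt : WithLp 2 (ℝ × EuclideanSpace ℝ (Fin d)))
    (θ : EuclideanSpace ℝ (Fin m)) : ℝ :=
  ℓ (WithLp.equiv 2 (ℝ × EuclideanSpace ℝ (Fin d)) xt).2 θ -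
    (WithLp.equiv 2 (ℝ × EuclideanSpace ℝ (Fin d)) xt).1 *
      (‖(WithLp.equiv 2 (ℝ × EuclideanSpace ℝ (Fin d)) xt).2 - x‖ - ε)

/-- The gradient `∇_x̃ J` of the Lagrangian in `x̃ = (μ, x')`. -/
noncomputable def advLagrangianGrad (d m : ℕ)
    (ℓ : EuclideanSpace ℝ (Fin d) → EuclideanSpace ℝ (Fin m) → ℝ)
    (x : EuclideanSpace ℝ (Fin d)) (ε : ℝ)
    (xt : WithLp 2 (ℝ × EuclideanSpace ℝ (Fin d)))
    (θ : EuclideanSpace ℝ (Fin m)) : WithLp 2 (ℝ × EuclideanSpace ℝ (Fin d)) :=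
  gradient (fun xt' => advLagrangian d m ℓ x ε xt' θ) xt

/-! The bordered Hessian is bounded below by `c`, hence injective and (in finite dimension)
invertible, so the implicit function theorem gives a `C¹` branch `θ ↦ (μ(θ), x'(θ))` of KKT points
on a ball around `θ₀`. Differentiating the KKT equation along the branch gives
`∇²J ∘ D(μ, x') = -∂_θ∇J`, whence `‖D(μ, x')‖ ≤ C_θx / c` at every point of the ball; the mean value
inequality on the (convex) ball turns this into the Lipschitz bound, which passes to the
`x'`-component because the projection out of the `L²` product is `1`-Lipschitz. -/

open Filter Topology ContinuousLinearMap

variable {E F G : Type*} [NormedAddCommGroup E] [NormedSpace ℝ E]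
  [NormedAddCommGroup F] [NormedSpace ℝ F] [NormedAddCommGroup G] [NormedSpace ℝ G]

theorem ContinuousLinearMap.injective_of_mul_norm_le {c : ℝ} (hc : 0 < c) {A : E →L[ℝ] G}
    (hA : ∀ v, c * ‖v‖ ≤ ‖A v‖) : Function.Injective A := by
  refine (injective_iff_map_eq_zero A).2 fun v hv => norm_le_zero_iff.1 ?_
  have hcv := hA v
  rw [hv, norm_zero] at hcv
  exact nonpos_of_mul_nonpos_right hcv hc

theorem ContinuousLinearMap.opNorm_le_div_of_comp_add_eq_zero {c C : ℝ} (hc : 0 < c)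
    {A : E →L[ℝ] G} {B : F →L[ℝ] G} {L : F →L[ℝ] E} (hA : ∀ v, c * ‖v‖ ≤ ‖A v‖)
    (hB : ‖B‖ ≤ C) (hL : A ∘L L + B = 0) : ‖L‖ ≤ C / c := by
  refine opNorm_le_bound _ (div_nonneg ((norm_nonneg B).trans hB) hc.le) fun w => ?_
  have hAL : A (L w) = -B w := eq_neg_of_add_eq_zero_left (congrArg (· w) hL)
  rw [div_mul_eq_mul_div, le_div_iff₀' hc]
  calc c * ‖L w‖ ≤ ‖A (L w)‖ := hA (L w)
    _ = ‖B w‖ := by rw [hAL, norm_neg]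
    _ ≤ C * ‖w‖ := B.le_of_opNorm_le hB w

theorem DifferentiableAt.fderiv_comp_prodMk_left {f : E × F → G} {q : E × F}
    (hf : DifferentiableAt ℝ f q) :
    fderiv ℝ (fun a => f (a, q.2)) q.1 = fderiv ℝ f q ∘L inl ℝ E F :=
  (hf.hasFDerivAt.comp q.1 (hasFDerivAt_prodMk_left q.1 q.2)).fderiv

theorem DifferentiableAt.fderiv_comp_prodMk_right {f : E × F → G} {q : E × F}
    (hf : DifferentiableAt ℝ f q) :
    fderiv ℝ (fun b => f (q.1, b)) q.2 = fderiv ℝ f q ∘L inr ℝ E F :=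
  (hf.hasFDerivAt.comp q.2 (hasFDerivAt_prodMk_right q.1 q.2)).fderiv

theorem fderiv_comp_inl_comp_add_eq_zero {f : E × F → G} {g : F → E} {θ : F} {y : G}
    (hf : DifferentiableAt ℝ f (g θ, θ)) (hg : DifferentiableAt ℝ g θ)
    (hfg : ∀ᶠ θ' in 𝓝 θ, f (g θ', θ') = y) :
    (fderiv ℝ f (g θ, θ) ∘L inl ℝ E F) ∘L fderiv ℝ g θ + fderiv ℝ f (g θ, θ) ∘L inr ℝ E F
      = 0 := by
  have hchain := HasFDerivAt.comp (f := fun θ' => (g θ', θ')) θ hf.hasFDerivAt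
    (hg.hasFDerivAt.prodMk (hasFDerivAt_id θ))
  have hconst : HasFDerivAt (fun θ' => f (g θ', θ')) (0 : F →L[ℝ] G) θ :=
    (hasFDerivAt_const y θ).congr_of_eventuallyEq hfg
  rw [hconst.unique hchain]
  ext w
  simp [← map_add]

section Implicit

variable [FiniteDimensional ℝ E] [CompleteSpace F] {f : E × F → E} {V : Set (E × F)}
  {p₀ : E × F}

theorem ContDiffAt.exists_implicitFunction_fst (hf : ContDiffAt ℝ 1 f p₀)
    (hinj : Function.Injective (fderiv ℝ f p₀ ∘L inl ℝ E F)) :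
    ∃ g : F → E, g p₀.2 = p₀.1 ∧ ContDiffAt ℝ 1 g p₀.2 ∧ ∀ᶠ θ in 𝓝 p₀.2, f (g θ, θ) = f p₀ := by
  -- `ContDiffAt.implicitFunction` solves for the second factor, hence the swap.
  let σ := ContinuousLinearEquiv.prodComm ℝ F E
  have hfσ : ContDiffAt ℝ 1 (f ∘ σ) p₀.swap := hf.comp p₀.swap σ.contDiff.contDiffAt
  have hderiv : fderiv ℝ (f ∘ σ) p₀.swap ∘L inr ℝ F E = fderiv ℝ f p₀ ∘L inl ℝ E F := by
    rw [σ.comp_right_fderiv]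
    ext; rfl
  have hinv : (fderiv ℝ (f ∘ σ) p₀.swap ∘L inr ℝ F E).IsInvertible := by
    rw [hderiv]
    exact ⟨(LinearEquiv.ofInjectiveEndo _ hinj).toContinuousLinearEquiv, rfl⟩
  exact ⟨hfσ.implicitFunction one_ne_zero hinv, hfσ.implicitFunction_apply_self one_ne_zero hinv,
    hfσ.contDiffAt_implicitFunction one_ne_zero hinv,
    hfσ.eventually_apply_implicitFunction one_ne_zero hinv⟩

theorem exists_ball_implicitFunction_fst (hV : IsOpen V) (hf : ContDiffOn ℝ 1 f V)
    (hp₀ : p₀ ∈ V) (hinj : Function.Injective (fderiv ℝ f p₀ ∘L inl ℝ E F)) :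
    ∃ r > 0, ∃ g : F → E, ContDiffOn ℝ 1 g (Metric.ball p₀.2 r) ∧ g p₀.2 = p₀.1 ∧
      ∀ θ ∈ Metric.ball p₀.2 r, (g θ, θ) ∈ V ∧ f (g θ, θ) = f p₀ := by
  obtain ⟨g, hg₀, hg, hgf⟩ :=
    (hf.contDiffAt (hV.mem_nhds hp₀)).exists_implicitFunction_fst hinj
  have hgV : ∀ᶠ θ in 𝓝 p₀.2, (g θ, θ) ∈ V := by
    refine (hg.continuousAt.prodMk continuousAt_id).eventually_mem ?_
    simpa [hg₀] using hV.mem_nhds hp₀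
  obtain ⟨t, ht, hgt⟩ := hg.contDiffOn le_rfl (by simp)
  obtain ⟨r, hr, hball⟩ := Metric.mem_nhds_iff.1 ((hgV.and hgf).and ht)
  exact ⟨r, hr, g, hgt.mono fun θ hθ => (hball hθ).2, hg₀, fun θ hθ => (hball hθ).1⟩

theorem exists_implicitFunction_fst_lipschitz (hV : IsOpen V) (hf : ContDiffOn ℝ 1 f V)
    {c C : ℝ} (hc : 0 < c)
    (hsing : ∀ p ∈ V, ∀ v, c * ‖v‖ ≤ ‖fderiv ℝ (fun a => f (a, p.2)) p.1 v‖)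
    (hmix : ∀ p ∈ V, ‖fderiv ℝ (fun b => f (p.1, b)) p.2‖ ≤ C)
    (hp₀ : p₀ ∈ V) (hfp₀ : f p₀ = 0) :
    ∃ U : Set F, IsOpen U ∧ Convex ℝ U ∧ p₀.2 ∈ U ∧
      ∃ g : F → E, ContDiffOn ℝ 1 g U ∧ g p₀.2 = p₀.1 ∧ (∀ θ ∈ U, f (g θ, θ) = 0) ∧
        ∀ θ₁ ∈ U, ∀ θ₂ ∈ U, ‖g θ₁ - g θ₂‖ ≤ C / c * ‖θ₁ - θ₂‖ := by
  have hdiff : ∀ p ∈ V, DifferentiableAt ℝ f p := fun p hp =>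
    (hf.contDiffAt (hV.mem_nhds hp)).differentiableAt one_ne_zero
  have hinj : Function.Injective (fderiv ℝ f p₀ ∘L inl ℝ E F) := by
    rw [← (hdiff p₀ hp₀).fderiv_comp_prodMk_left]
    exact injective_of_mul_norm_le hc (hsing p₀ hp₀)
  obtain ⟨r, hr, g, hg, hg₀, hgV⟩ := exists_ball_implicitFunction_fst hV hf hp₀ hinj
  rw [hfp₀] at hgV
  have hgdiff : ∀ θ ∈ Metric.ball p₀.2 r, DifferentiableAt ℝ g θ := fun θ hθ =>
    (hg.contDiffAt (Metric.isOpen_ball.mem_nhds hθ)).differentiableAt one_ne_zero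
  have hbound : ∀ θ ∈ Metric.ball p₀.2 r, ‖fderiv ℝ g θ‖ ≤ C / c := by
    intro θ hθ
    have hq := (hgV θ hθ).1
    refine opNorm_le_div_of_comp_add_eq_zero hc (L := fderiv ℝ g θ) ?_ ?_
      (fderiv_comp_inl_comp_add_eq_zero (y := 0) (hdiff _ hq) (hgdiff θ hθ) ?_)
    · simpa only [(hdiff _ hq).fderiv_comp_prodMk_left] using hsing _ hq
    · simpa only [(hdiff _ hq).fderiv_comp_prodMk_right] using hmix _ hq
    · filter_upwards [Metric.isOpen_ball.mem_nhds hθ] with θ' hθ' using (hgV θ' hθ').2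
  exact ⟨_, Metric.isOpen_ball, convex_ball _ _, Metric.mem_ball_self hr, g, hg, hg₀,
    fun θ hθ => (hgV θ hθ).2, fun θ₁ hθ₁ θ₂ hθ₂ =>
      (convex_ball _ _).norm_image_sub_le_of_norm_fderiv_le hgdiff hbound hθ₂ hθ₁⟩

end Implicit

theorem boundary_adv_example_implicit_lipschitz_general (d m : ℕ)
    (ℓ : EuclideanSpace ℝ (Fin d) → EuclideanSpace ℝ (Fin m) → ℝ)
    (x : EuclideanSpace ℝ (Fin d)) (ε : ℝ)
    (V : Set (WithLp 2 (ℝ × EuclideanSpace ℝ (Fin d)) × EuclideanSpace ℝ (Fin m)))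
    (hV : IsOpen V)
    (hsmooth : ContDiffOn ℝ 1
      (fun p : WithLp 2 (ℝ × EuclideanSpace ℝ (Fin d)) × EuclideanSpace ℝ (Fin m) =>
        advLagrangianGrad d m ℓ x ε p.1 p.2) V)
    (c Cθx : ℝ) (hc : 0 < c)
    (hsing : ∀ p ∈ V, ∀ v : WithLp 2 (ℝ × EuclideanSpace ℝ (Fin d)),
      c * ‖v‖ ≤ ‖(fderiv ℝ (fun xt => advLagrangianGrad d m ℓ x ε xt p.2) p.1) v‖)
    (hmix : ∀ p ∈ V,
      ‖fderiv ℝ (fun θ => advLagrangianGrad d m ℓ x ε p.1 θ) p.2‖ ≤ Cθx)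
    (μstar : ℝ) (xstar : EuclideanSpace ℝ (Fin d)) (θ₀ : EuclideanSpace ℝ (Fin m))
    (hmem : ((WithLp.equiv 2 (ℝ × EuclideanSpace ℝ (Fin d))).symm (μstar, xstar), θ₀) ∈ V)
    (hKKT : advLagrangianGrad d m ℓ x ε
      ((WithLp.equiv 2 (ℝ × EuclideanSpace ℝ (Fin d))).symm (μstar, xstar)) θ₀ = 0) :
    ∃ U : Set (EuclideanSpace ℝ (Fin m)), IsOpen U ∧ Convex ℝ U ∧ θ₀ ∈ U ∧
      ∃ (μg : EuclideanSpace ℝ (Fin m) → ℝ)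
        (xg : EuclideanSpace ℝ (Fin m) → EuclideanSpace ℝ (Fin d)),
        ContDiffOn ℝ 1 μg U ∧ ContDiffOn ℝ 1 xg U ∧
        μg θ₀ = μstar ∧ xg θ₀ = xstar ∧
        (∀ θ ∈ U, advLagrangianGrad d m ℓ x ε
          ((WithLp.equiv 2 (ℝ × EuclideanSpace ℝ (Fin d))).symm (μg θ, xg θ)) θ = 0) ∧
        ∀ θ₁ ∈ U, ∀ θ₂ ∈ U, ‖xg θ₁ - xg θ₂‖ ≤ (Cθx / c) * ‖θ₁ - θ₂‖ := by
  obtain ⟨U, hUo, hUc, hθ₀U, g, hg, hg₀, hgKKT, hglip⟩ :=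
    exists_implicitFunction_fst_lipschitz (f := fun p => advLagrangianGrad d m ℓ x ε p.1 p.2)
      hV hsmooth hc hsing hmix hmem hKKT
  refine ⟨U, hUo, hUc, hθ₀U, fun θ => (g θ).fst, fun θ => (g θ).snd,
    (WithLp.fstL 2 ℝ ℝ (EuclideanSpace ℝ (Fin d))).contDiff.comp_contDiffOn hg,
    (WithLp.sndL 2 ℝ ℝ (EuclideanSpace ℝ (Fin d))).contDiff.comp_contDiffOn hg,
    by simp [hg₀], by simp [hg₀], hgKKT,
    fun θ₁ hθ₁ θ₂ hθ₂ => ?_⟩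
  calc ‖(g θ₁).snd - (g θ₂).snd‖ = dist (g θ₁).snd (g θ₂).snd := (dist_eq_norm _ _).symm
    _ ≤ dist (g θ₁) (g θ₂) := WithLp.dist_snd_le _ _
    _ = ‖g θ₁ - g θ₂‖ := dist_eq_norm _ _
    _ ≤ Cθx / c * ‖θ₁ - θ₂‖ := hglip θ₁ hθ₁ θ₂ hθ₂

/-- Implicit-function-theorem smoothness of the optimal adversarial
example on the boundary of the `L₂` feasible region. If `∇_x̃ J` is `C¹` on an open
set `V`, every singular value of the bordered Hessian `∇²_x̃ J` is at least `c > 0`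
on `V` (formalized as `c‖v‖ ≤ ‖∇²_x̃ J v‖` for all `v`), and the mixed derivative
`∂_θ ∇_x̃ J` has operator norm at most `C_θx` on `V`, then around any KKT point
`∇_x̃ J(μ*, x'*, θ₀) = 0` with `‖x'* − x‖₂ = ε` there are an open convex
neighborhood `U` of `θ₀` and `C¹` maps `μ, x'` on `U` with `μ(θ₀) = μ*`,
`x'(θ₀) = x'*`, `∇_x̃ J(μ(θ), x'(θ), θ) = 0` on `U`, and `x'` is
`(C_θx/c)`-Lipschitz on `U`. -/
theorem boundary_adv_example_implicit_lipschitz (d m : ℕ)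
    (ℓ : EuclideanSpace ℝ (Fin d) → EuclideanSpace ℝ (Fin m) → ℝ)
    (x : EuclideanSpace ℝ (Fin d)) (ε : ℝ) (hε : 0 < ε)
    (V : Set (WithLp 2 (ℝ × EuclideanSpace ℝ (Fin d)) × EuclideanSpace ℝ (Fin m)))
    (hV : IsOpen V)
    (hsmooth : ContDiffOn ℝ 1
      (fun p : WithLp 2 (ℝ × EuclideanSpace ℝ (Fin d)) × EuclideanSpace ℝ (Fin m) =>
        advLagrangianGrad d m ℓ x ε p.1 p.2) V)
    (c Cθx : ℝ) (hc : 0 < c) (hCθx : 0 ≤ Cθx)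
    (hsing : ∀ p ∈ V, ∀ v : WithLp 2 (ℝ × EuclideanSpace ℝ (Fin d)),
      c * ‖v‖ ≤ ‖(fderiv ℝ (fun xt => advLagrangianGrad d m ℓ x ε xt p.2) p.1) v‖)
    (hmix : ∀ p ∈ V,
      ‖fderiv ℝ (fun θ => advLagrangianGrad d m ℓ x ε p.1 θ) p.2‖ ≤ Cθx)
    (μstar : ℝ) (xstar : EuclideanSpace ℝ (Fin d)) (θ₀ : EuclideanSpace ℝ (Fin m))
    (hmem : ((WithLp.equiv 2 (ℝ × EuclideanSpace ℝ (Fin d))).symm (μstar, xstar), θ₀) ∈ V)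
    (hbdry : ‖xstar - x‖ = ε)
    (hKKT : advLagrangianGrad d m ℓ x ε
      ((WithLp.equiv 2 (ℝ × EuclideanSpace ℝ (Fin d))).symm (μstar, xstar)) θ₀ = 0) :
    ∃ U : Set (EuclideanSpace ℝ (Fin m)), IsOpen U ∧ Convex ℝ U ∧ θ₀ ∈ U ∧
      ∃ (μg : EuclideanSpace ℝ (Fin m) → ℝ)
        (xg : EuclideanSpace ℝ (Fin m) → EuclideanSpace ℝ (Fin d)),
        ContDiffOn ℝ 1 μg U ∧ ContDiffOn ℝ 1 xg U ∧
        μg θ₀ = μstar ∧ xg θ₀ = xstar ∧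
        (∀ θ ∈ U, advLagrangianGrad d m ℓ x ε
          ((WithLp.equiv 2 (ℝ × EuclideanSpace ℝ (Fin d))).symm (μg θ, xg θ)) θ = 0) ∧
        ∀ θ₁ ∈ U, ∀ θ₂ ∈ U, ‖xg θ₁ - xg θ₂‖ ≤ (Cθx / c) * ‖θ₁ - θ₂‖ :=
  boundary_adv_example_implicit_lipschitz_general d m ℓ x ε V hV hsmooth c Cθx hc hsing hmix μstar
    xstar θ₀ hmem hKKT
end
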